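/- The global transition matrix P of the PCA, given by P(x,y) = ∏_{n=1}^N (1/|V_n|) Σ_{i∈V_n} T_{x_i,y_n}, is irreducible and aperiodic if and only if the local transition matrix T is irreducible and aperiodic. -/
import Mathlib


open Matrix Finset MeasureTheory

/-- A row-stochastic matrix: nonnegative entries, each row sums to 1. -/
def RowStochastic {S : Type*} [Fintype S] (T : Matrix S S ℝ) : Prop :=
  (∀ j k, 0 ≤ T j k) ∧ ∀ j, ∑ k, T j k = 1

/-- Irreducibility of a nonnegative matrix: every state reaches every state. -/
def MatIrreducible {S : Type*} [Fintype S] [DecidableEq S] (T : Matrix S S ℝ) : Prop :=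
  ∀ i j, ∃ t : ℕ, 0 < (T ^ t) i j

/-- `d` is the period of state `i`: the gcd of the set of positive return times. -/
def IsGcdPeriod {S : Type*} [Fintype S] [DecidableEq S] (T : Matrix S S ℝ) (i : S) (d : ℕ) : Prop :=
  (∀ m : ℕ, 0 < m → 0 < (T ^ m) i i → d ∣ m) ∧
    ∀ e : ℕ, (∀ m : ℕ, 0 < m → 0 < (T ^ m) i i → e ∣ m) → e ∣ d

/-- The neighborhood of node `n` on the `N`-cycle: all nodes within cyclic distance `nv`. -/
def nbhd (N nv : ℕ) (n : Fin N) : Finset (Fin N) :=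
  Finset.univ.filter fun i => (n.val + N - i.val) % N ≤ nv ∨ (i.val + N - n.val) % N ≤ nv

/-- The PCA global transition matrix on configurations. -/
noncomputable def pcaP (N K nv : ℕ) (T : Matrix (Fin K) (Fin K) ℝ) :
    Matrix (Fin N → Fin K) (Fin N → Fin K) ℝ :=
  Matrix.of fun x y =>
    ∏ n : Fin N, (((nbhd N nv n).card : ℝ)⁻¹ * ∑ i ∈ nbhd N nv n, T (x i) (y n))

/-- Cyclic class decomposition of `[K]` for `T` with period `d`. -/
def CyclicClasses {K : ℕ} (T : Matrix (Fin K) (Fin K) ℝ) (d : ℕ)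
    (C : ℕ → Finset (Fin K)) : Prop :=
  (∀ r, C (r + d) = C r) ∧ (∀ k : Fin K, ∃! r : ℕ, r < d ∧ k ∈ C r) ∧
    ∀ j k, 0 < T j k → ∃ r, j ∈ C r ∧ k ∈ C (r + 1)


lemma rep_of_coprime {a b : ℕ} (ha : 0 < a) (hb : 0 < b) (hco : Nat.Coprime a b)
    {n : ℕ} (hn : a * b ≤ n) : ∃ x y, n = x * a + y * b := by
  haveI : NeZero b := ⟨hb.ne'⟩
  have hunit : (a : ZMod b) * (a : ZMod b)⁻¹ = 1 := ZMod.coe_mul_inv_eq_one a hco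
  set x : ℕ := ((n : ZMod b) * (a : ZMod b)⁻¹).val with hx
  have hxb : x < b := ZMod.val_lt _
  have hcast : ((x * a : ℕ) : ZMod b) = (n : ZMod b) := by
    push_cast [hx]
    rw [ZMod.natCast_val, ZMod.cast_id, mul_assoc,
      mul_comm ((a : ZMod b))⁻¹ (a : ZMod b), hunit, mul_one]
  have hmod : x * a ≡ n [MOD b] := (ZMod.natCast_eq_natCast_iff _ _ _).mp hcast
  have hle : x * a ≤ n := by
    calc x * a ≤ (b - 1) * a := Nat.mul_le_mul_right _ (by omega)
    _ ≤ b * a := Nat.mul_le_mul_right _ (Nat.sub_le _ _)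
    _ = a * b := mul_comm _ _
    _ ≤ n := hn
  obtain ⟨y, hy⟩ := (Nat.modEq_iff_dvd' hle).mp hmod
  exact ⟨x, y, by rw [mul_comm y b]; omega⟩

lemma smul_mem_add_closed {S : Set ℕ} (hadd : ∀ a ∈ S, ∀ b ∈ S, a + b ∈ S) :
    ∀ k, 0 < k → ∀ a ∈ S, k * a ∈ S := by
  intro k
  induction k with
  | zero => omega
  | succ k ih =>
    intro _ a ha
    rcases Nat.eq_zero_or_pos k with hk | hk
    · simpa [hk] using ha
    · have := hadd _ (ih hk a ha) _ ha
      simpa [Nat.succ_mul] using this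

lemma pair_lemma {S : Set ℕ} (hadd : ∀ a ∈ S, ∀ b ∈ S, a + b ∈ S)
    {a b : ℕ} (ha : a ∈ S) (hb : b ∈ S) (ha0 : 0 < a) (hb0 : 0 < b) :
    ∃ n0, ∀ n, n0 ≤ n → Nat.gcd a b ∣ n → n ∈ S := by
  set d := Nat.gcd a b with hd
  have hdpos : 0 < d := Nat.gcd_pos_of_pos_left _ ha0
  set a' := a / d with ha'
  set b' := b / d with hb'
  have haa : a' * d = a := Nat.div_mul_cancel (Nat.gcd_dvd_left a b)
  have hbb : b' * d = b := Nat.div_mul_cancel (Nat.gcd_dvd_right a b)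
  have ha'0 : 0 < a' := by nlinarith
  have hb'0 : 0 < b' := by nlinarith
  have hco : Nat.Coprime a' b' := Nat.coprime_div_gcd_div_gcd hdpos
  refine ⟨d * (a' * b'), fun n hn hdn => ?_⟩
  obtain ⟨m, rfl⟩ := hdn
  have hm : a' * b' ≤ m := by
    have := Nat.le_of_mul_le_mul_left hn hdpos
    omega
  obtain ⟨x, y, hxy⟩ := rep_of_coprime ha'0 hb'0 hco hm
  have hrw : d * m = x * a + y * b := by
    rw [hxy]; rw [← haa, ← hbb]; ring
  rw [hrw]
  rcases Nat.eq_zero_or_pos x with hx | hx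
  · have hy : 0 < y := by
      rcases Nat.eq_zero_or_pos y with h0 | h0
      · subst hx h0; simp at hxy; nlinarith
      · exact h0
    simpa [hx] using smul_mem_add_closed hadd y hy b hb
  · rcases Nat.eq_zero_or_pos y with hy | hy
    · simpa [hy] using smul_mem_add_closed hadd x hx a ha
    · exact hadd _ (smul_mem_add_closed hadd x hx a ha) _ (smul_mem_add_closed hadd y hy b hb)

lemma numerical {S : Set ℕ} (hadd : ∀ a ∈ S, ∀ b ∈ S, a + b ∈ S)
    (hpos : ∀ a ∈ S, 0 < a) (hne : ∃ a, a ∈ S)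
    (hgcd : ∀ e : ℕ, (∀ m ∈ S, e ∣ m) → e ∣ 1) :
    ∃ n0, ∀ n, n0 ≤ n → n ∈ S := by
  classical
  have hD : ∃ d, 0 < d ∧ ∃ n0, ∀ n, n0 ≤ n → d ∣ n → n ∈ S := by
    obtain ⟨a, ha⟩ := hne
    have := pair_lemma hadd ha ha (hpos a ha) (hpos a ha)
    rw [Nat.gcd_self] at this
    exact ⟨a, hpos a ha, this⟩
  set d := Nat.find hD with hdd
  obtain ⟨hdpos, n0, hn0⟩ := Nat.find_spec hD
  have hdvd : ∀ c ∈ S, d ∣ c := by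
    intro c hc
    obtain ⟨p, hpge, hp⟩ := Nat.exists_infinite_primes (max (c + 1) n0)
    have hpc : ¬ p ∣ c := by
      intro h
      have := Nat.le_of_dvd (hpos c hc) h
      omega
    have hdp : d * p ∈ S := hn0 (d * p) (by nlinarith [le_max_right (c+1) n0]) ⟨p, rfl⟩
    obtain ⟨n1, hn1⟩ := pair_lemma hadd hdp hc (Nat.mul_pos hdpos hp.pos) (hpos c hc)
    have hg : Nat.gcd (d * p) c = Nat.gcd d c :=
      Nat.Coprime.gcd_mul_right_cancel d ((Nat.Prime.coprime_iff_not_dvd hp).mpr hpc)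
    rw [hg] at hn1
    have hgP : 0 < Nat.gcd d c ∧ ∃ n0, ∀ n, n0 ≤ n → Nat.gcd d c ∣ n → n ∈ S :=
      ⟨Nat.gcd_pos_of_pos_left _ hdpos, n1, hn1⟩
    have hled : d ≤ Nat.gcd d c := Nat.find_min' hD hgP
    have : Nat.gcd d c = d :=
      Nat.le_antisymm (Nat.le_of_dvd hdpos (Nat.gcd_dvd_left d c)) hled
    rw [← this]
    exact Nat.gcd_dvd_right d c
  have hd1 : d = 1 := Nat.dvd_one.mp (hgcd d hdvd)
  refine ⟨n0, fun n hn => hn0 n hn ?_⟩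
  rw [← hdd, hd1]
  exact one_dvd n

section MatAux
variable {σ : Type*} [Fintype σ] [DecidableEq σ]

lemma pow_entry_nonneg (A : Matrix σ σ ℝ) (h : ∀ j k, 0 ≤ A j k) (t : ℕ) :
    ∀ j k, 0 ≤ (A ^ t) j k := by
  induction t with
  | zero => intro j k; by_cases hjk : j = k <;> simp [Matrix.one_apply, hjk]
  | succ t ih =>
    intro j k
    rw [pow_succ, Matrix.mul_apply]
    exact Finset.sum_nonneg fun m _ => mul_nonneg (ih j m) (h m k)

lemma mul_entry_pos {A B : Matrix σ σ ℝ} (hA : ∀ j k, 0 ≤ A j k) (hB : ∀ j k, 0 ≤ B j k)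
    {j m k : σ} (h1 : 0 < A j m) (h2 : 0 < B m k) : 0 < (A * B) j k := by
  rw [Matrix.mul_apply]
  exact Finset.sum_pos' (fun i _ => mul_nonneg (hA j i) (hB i k))
    ⟨m, Finset.mem_univ m, mul_pos h1 h2⟩

lemma mul_entry_pos_elim {A B : Matrix σ σ ℝ} (hA : ∀ j k, 0 ≤ A j k)
    {j k : σ} (h : 0 < (A * B) j k) : ∃ m, 0 < A j m ∧ 0 < B m k := by
  rw [Matrix.mul_apply] at h
  have h' : ∑ m : σ, (0:ℝ) < ∑ m, A j m * B m k := by simpa using h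
  obtain ⟨m, _, hm⟩ := Finset.exists_lt_of_sum_lt h'
  rcases mul_pos_iff.mp hm with ⟨h1, h2⟩ | ⟨h1, _⟩
  · exact ⟨m, h1, h2⟩
  · exact absurd h1 (not_lt.mpr (hA j m))

end MatAux

lemma self_mem_nbhd {N : ℕ} (nv : ℕ) (n : Fin N) : n ∈ nbhd N nv n := by
  simp only [nbhd, Finset.mem_filter, Finset.mem_univ, true_and]
  left
  simp [Nat.add_sub_cancel_left, Nat.mod_self]

variable {K N nv : ℕ}

lemma pcaP_nonneg (T : Matrix (Fin K) (Fin K) ℝ) (hT : RowStochastic T) :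
    ∀ x y, 0 ≤ pcaP N K nv T x y := by
  intro x y
  simp only [pcaP, Matrix.of_apply]
  refine Finset.prod_nonneg fun n _ => mul_nonneg (by positivity) ?_
  exact Finset.sum_nonneg fun i _ => hT.1 _ _

lemma pcaP_pos_of (T : Matrix (Fin K) (Fin K) ℝ) (hT : RowStochastic T)
    {x y : Fin N → Fin K} (h : ∀ n, 0 < T (x n) (y n)) : 0 < pcaP N K nv T x y := by
  simp only [pcaP, Matrix.of_apply]
  apply Finset.prod_pos
  intro n _
  have hc : 0 < (nbhd N nv n).card := Finset.card_pos.mpr ⟨n, self_mem_nbhd nv n⟩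
  refine mul_pos (by positivity) ?_
  exact Finset.sum_pos' (fun i _ => hT.1 _ _) ⟨n, self_mem_nbhd nv n, h n⟩

lemma pcaP_pos_elim (T : Matrix (Fin K) (Fin K) ℝ) (hT : RowStochastic T)
    {x y : Fin N → Fin K} (h : 0 < pcaP N K nv T x y) (n : Fin N) :
    ∃ i, 0 < T (x i) (y n) := by
  by_contra hcon
  push_neg at hcon
  have hz : (((nbhd N nv n).card : ℝ)⁻¹ * ∑ i ∈ nbhd N nv n, T (x i) (y n)) = 0 := by
    have hs : ∑ i ∈ nbhd N nv n, T (x i) (y n) = 0 :=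
      Finset.sum_eq_zero fun i _ => le_antisymm (hcon i) (hT.1 _ _)
    rw [hs, mul_zero]
  have h0 : ∏ m : Fin N, (((nbhd N nv m).card : ℝ)⁻¹ * ∑ i ∈ nbhd N nv m, T (x i) (y m)) = 0 :=
    Finset.prod_eq_zero (Finset.mem_univ n) hz
  simp only [pcaP, Matrix.of_apply] at h
  rw [h0] at h
  exact lt_irrefl _ h

lemma pcaP_pow_pos (T : Matrix (Fin K) (Fin K) ℝ) (hT : RowStochastic T) :
    ∀ (t : ℕ) (x y : Fin N → Fin K), (∀ n, 0 < (T ^ t) (x n) (y n)) →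
      0 < ((pcaP N K nv T) ^ t) x y := by
  intro t
  induction t with
  | zero =>
    intro x y h
    have hxy : x = y := funext fun n => by
      by_contra hne
      have := h n
      simp [Matrix.one_apply, hne] at this
    subst hxy
    simp [Matrix.one_apply_eq]
  | succ t ih =>
    intro x y h
    have hmid : ∀ n, ∃ m, 0 < (T ^ t) (x n) m ∧ 0 < T m (y n) := fun n => by
      have h' := h n
      rw [pow_succ] at h'
      exact mul_entry_pos_elim (pow_entry_nonneg T hT.1 t) h'
    choose z hz1 hz2 using hmid
    rw [pow_succ]
    exact mul_entry_pos (pow_entry_nonneg _ (pcaP_nonneg T hT) t) (pcaP_nonneg T hT)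
      (ih x z hz1) (pcaP_pos_of T hT hz2)

lemma pcaP_pow_pos_elim (T : Matrix (Fin K) (Fin K) ℝ) (hT : RowStochastic T) :
    ∀ (t : ℕ) (x y : Fin N → Fin K), 0 < ((pcaP N K nv T) ^ t) x y →
      ∀ n, ∃ i, 0 < (T ^ t) (x i) (y n) := by
  intro t
  induction t with
  | zero =>
    intro x y h n
    have hxy : x = y := by
      by_contra hne
      simp [Matrix.one_apply, hne] at h
    subst hxy
    exact ⟨n, by simp [Matrix.one_apply_eq]⟩
  | succ t ih =>
    intro x y h n
    rw [pow_succ] at h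
    obtain ⟨z, h1, h2⟩ := mul_entry_pos_elim (pow_entry_nonneg _ (pcaP_nonneg T hT) t) h
    obtain ⟨i, hi⟩ := pcaP_pos_elim T hT h2 n
    obtain ⟨i', hi'⟩ := ih x z h1 i
    refine ⟨i', ?_⟩
    rw [pow_succ]
    exact mul_entry_pos (pow_entry_nonneg T hT.1 t) hT.1 hi' hi

lemma eventually_pos (T : Matrix (Fin K) (Fin K) ℝ) (hT : RowStochastic T)
    (hirr : MatIrreducible T) (hap : ∀ i, IsGcdPeriod T i 1) (j k : Fin K) :
    ∃ t0, ∀ t, t0 ≤ t → 0 < (T ^ t) j k := by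
  set S : Set ℕ := {m | 0 < m ∧ 0 < (T ^ m) j j} with hS
  have hadd : ∀ a ∈ S, ∀ b ∈ S, a + b ∈ S := by
    rintro a ⟨ha0, ha⟩ b ⟨hb0, hb⟩
    exact ⟨by omega, by
      rw [pow_add]
      exact mul_entry_pos (pow_entry_nonneg T hT.1 a) (pow_entry_nonneg T hT.1 b) ha hb⟩
  have hne : ∃ a, a ∈ S := by
    have hsum : (0:ℝ) < ∑ m, T j m := by rw [hT.2 j]; norm_num
    have hsum' : ∑ m : Fin K, (0:ℝ) < ∑ m, T j m := by simpa using hsum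
    obtain ⟨k0, _, hk0⟩ := Finset.exists_lt_of_sum_lt hsum'
    obtain ⟨t, ht⟩ := hirr k0 j
    refine ⟨1 + t, ⟨by omega, ?_⟩⟩
    rw [pow_add, pow_one]
    exact mul_entry_pos hT.1 (pow_entry_nonneg T hT.1 t) hk0 ht
  have hgcd : ∀ e : ℕ, (∀ m ∈ S, e ∣ m) → e ∣ 1 := fun e he =>
    (hap j).2 e fun m hm hpm => he m ⟨hm, hpm⟩
  obtain ⟨n0, hn0⟩ := numerical hadd (fun a ha => ha.1) hne hgcd
  obtain ⟨t2, ht2⟩ := hirr j k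
  refine ⟨n0 + t2, fun t ht => ?_⟩
  have h1 : 0 < (T ^ (t - t2)) j j := (hn0 (t - t2) (by omega)).2
  have htt : t = (t - t2) + t2 := by omega
  rw [htt, pow_add]
  exact mul_entry_pos (pow_entry_nonneg T hT.1 _) (pow_entry_nonneg T hT.1 _) h1 ht2

/-- The global transition matrix `P` of the PCA is irreducible and aperiodic
if and only if the local transition matrix `T` is irreducible and aperiodic. -/
theorem stmt_6 {K N nv : ℕ} (hN : 0 < N) (T : Matrix (Fin K) (Fin K) ℝ)
    (hT : RowStochastic T) :
    (MatIrreducible (pcaP N K nv T) ∧ ∀ x, IsGcdPeriod (pcaP N K nv T) x 1)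
      ↔ (MatIrreducible T ∧ ∀ i, IsGcdPeriod T i 1) := by
  constructor
  · rintro ⟨hPirr, hPap⟩
    constructor
    · intro j k
      obtain ⟨t, ht⟩ := hPirr (fun _ => j) (fun _ => k)
      obtain ⟨i, hi⟩ := pcaP_pow_pos_elim T hT t _ _ ht ⟨0, hN⟩
      exact ⟨t, hi⟩
    · intro i
      refine ⟨fun m _ _ => one_dvd m, fun e he => ?_⟩
      refine (hPap (fun _ => i)).2 e fun m hm hpm => ?_
      obtain ⟨i', hi'⟩ := pcaP_pow_pos_elim T hT m _ _ hpm ⟨0, hN⟩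
      exact he m hm hi'
  · rintro ⟨hirr, hap⟩
    have hev := eventually_pos T hT hirr hap
    constructor
    · intro x y
      choose t0 ht0 using fun n => hev (x n) (y n)
      exact ⟨Finset.univ.sup t0, pcaP_pow_pos T hT _ x y fun n =>
        ht0 n _ (Finset.le_sup (Finset.mem_univ n))⟩
    · intro x
      refine ⟨fun m _ _ => one_dvd m, fun e he => ?_⟩
      choose t0 ht0 using fun n => hev (x n) (x n)
      set t := Finset.univ.sup t0 + 1 with htdef
      have hb : ∀ n, t0 n ≤ t := fun n =>
        le_trans (Finset.le_sup (Finset.mem_univ n)) (Nat.le_succ _)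
      have h1 : 0 < ((pcaP N K nv T) ^ t) x x :=
        pcaP_pow_pos T hT t x x fun n => ht0 n t (hb n)
      have h2 : 0 < ((pcaP N K nv T) ^ (t + 1)) x x :=
        pcaP_pow_pos T hT (t + 1) x x fun n => ht0 n (t + 1) (le_trans (hb n) (Nat.le_succ t))
      have e1 := he t (by omega) h1
      have e2 := he (t + 1) (by omega) h2
      simpa using Nat.dvd_sub e2 e1
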